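/- Let 0 < S₀ ≤ S₁ and define S_opt : [0,1] → ℝ by S_opt(x) = S₀ for 0 ≤ x ≤ 1/2, S_opt(x) = S₀/(2(1−x)) for 1/2 < x < 1 − S₀/(2S₁), and S_opt(x) = S₁ for 1 − S₀/(2S₁) ≤ x ≤ 1. Then the supremum of F[S] := (1/2)(∫₀¹ S dx)² / ∫₀¹ (1−x)S² dx over all measurable S : [0,1] → ℝ with S₀ ≤ S(x) ≤ S₁ equals 1 + (1/2)·log(S₁/S₀), and this supremum is attained by S_opt. -/

import Mathlib

open MeasureTheory intervalIntegral

/-- The functional `F[S] = (1/2)(∫₀¹ S dx)² / ∫₀¹ (1−x) S² dx`. -/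
noncomputable def coolingFunctional (S : ℝ → ℝ) : ℝ :=
  (1/2) * (∫ x in (0:ℝ)..1, S x)^2 / ∫ x in (0:ℝ)..1, (1 - x) * (S x)^2

/-- The optimal Seebeck profile. -/
noncomputable def Sopt (S₀ S₁ : ℝ) (x : ℝ) : ℝ :=
  if x ≤ 1/2 then S₀
  else if x < 1 - S₀ / (2 * S₁) then S₀ / (2 * (1 - x))
  else S₁

/-!
For a multiplier `l > 0` and `M = 1 + log (S₁ / S₀) / 2`, the pointwise maximum over
`s ∈ [S₀, S₁]` of the gain `l s - (1 - x) s²` integrates over `[0, 1]` to at most `M l² / 2`: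
the unconstrained maximiser `l / (2 (1 - x))`, with value `l² / (4 (1 - x))`, is admissible between
`1 - l / (2 S₀)` and `1 - l / (2 S₁)`, where it produces the logarithm, and is clipped to `S₀`
before and to `S₁` after. Integrating, `l I - J ≤ M l² / 2` for `I = ∫ S` and `J = ∫ (1 - x) S²`,
and the choice `l = I / M` turns this into `I² ≤ 2 M J`, i.e. `F[S] ≤ M`. The profile `Sopt` is the
pointwise maximiser for `l = S₀`, and computing its two integrals gives `F[Sopt] = M`.
-/

open Set Real

theorem intervalIntegrable_comp_of_mapsTo {S : ℝ → ℝ} {g : ℝ × ℝ → ℝ}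
    (hg : Continuous g) (hS : Measurable S) {p q c d : ℝ} (hpq : p ≤ q)
    (hSpq : MapsTo S (Icc p q) (Icc c d)) :
    IntervalIntegrable (fun x => g (x, S x)) volume p q := by
  obtain ⟨C, hC⟩ := (isCompact_Icc.prod isCompact_Icc).exists_bound_of_continuousOn
    (hg.continuousOn (s := Icc p q ×ˢ Icc c d))
  rw [intervalIntegrable_iff_integrableOn_Ioc_of_le hpq]
  refine Measure.integrableOn_of_bounded measure_Ioc_lt_top.ne
    (hg.measurable.comp (measurable_id.prodMk hS)).aestronglyMeasurable (M := C) ?_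
  filter_upwards [ae_restrict_mem measurableSet_Ioc] with x hx
  exact hC _ ⟨Ioc_subset_Icc_self hx, hSpq (Ioc_subset_Icc_self hx)⟩

theorem integral_one_sub (p q : ℝ) :
    ∫ x in p..q, (1 - x) = ((1 - p) ^ 2 - (1 - q) ^ 2) / 2 := by
  rw [integral_comp_sub_left (fun x => x) 1, integral_id]

theorem integral_inv_one_sub {p q : ℝ} (hp : p < 1) (hq : q < 1) :
    ∫ x in p..q, (1 - x)⁻¹ = log ((1 - p) / (1 - q)) := by
  rw [integral_comp_sub_left (fun x => x⁻¹) 1, integral_inv_of_pos (by linarith) (by linarith)]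

theorem integral_mul_sub_one_sub_mul (l s p q : ℝ) :
    ∫ x in p..q, (l * s - (1 - x) * s ^ 2) =
      l * s * (q - p) - s ^ 2 * ((1 - p) ^ 2 - (1 - q) ^ 2) / 2 := by
  rw [integral_sub intervalIntegrable_const ((by fun_prop : Continuous _).intervalIntegrable _ _),
    intervalIntegral.integral_const, intervalIntegral.integral_mul_const, integral_one_sub,
    smul_eq_mul]
  ring

theorem mul_sub_mul_sq_le_sq_div (l t s : ℝ) (ht : 0 < t) :
    l * s - t * s ^ 2 ≤ l ^ 2 / 4 * t⁻¹ := by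
  rw [← div_eq_mul_inv, le_div_iff₀ ht]
  nlinarith [sq_nonneg (l - 2 * t * s)]

theorem mul_sub_mul_sq_le_of_le {l t s s₀ : ℝ} (ht : 0 ≤ t) (hs : s₀ ≤ s)
    (hl : l ≤ 2 * t * s₀) :
    l * s - t * s ^ 2 ≤ l * s₀ - t * s₀ ^ 2 := by
  nlinarith [mul_nonneg (sub_nonneg.2 hs) ht]

theorem mul_sub_mul_sq_le_of_ge {l t s s₁ : ℝ} (ht : 0 ≤ t) (hs : s ≤ s₁)
    (hl : 2 * t * s₁ ≤ l) :
    l * s - t * s ^ 2 ≤ l * s₁ - t * s₁ ^ 2 := by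
  nlinarith [mul_nonneg (sub_nonneg.2 hs) ht]

theorem one_le_one_add_half_log {S₀ S₁ : ℝ} (hS₀ : 0 < S₀) (hS₀S₁ : S₀ ≤ S₁) :
    1 ≤ 1 + 1/2 * log (S₁ / S₀) := by
  linarith [log_nonneg ((one_le_div hS₀).2 hS₀S₁)]

def gain (l : ℝ) (S : ℝ → ℝ) (x : ℝ) : ℝ := l * S x - (1 - x) * S x ^ 2

section Admissible

variable {S : ℝ → ℝ} {S₀ S₁ l : ℝ}

theorem intervalIntegrable_gain (hS : Measurable S) (hSI : MapsTo S (Icc 0 1) (Icc S₀ S₁))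
    {p q : ℝ} (hp : 0 ≤ p) (hpq : p ≤ q) (hq : q ≤ 1) :
    IntervalIntegrable (gain l S) volume p q :=
  intervalIntegrable_comp_of_mapsTo (g := fun z => l * z.2 - (1 - z.1) * z.2 ^ 2) (by fun_prop) hS
    hpq (hSI.mono_left (Icc_subset_Icc hp hq))

theorem integral_gain_le_integral (hS : Measurable S) (hSI : MapsTo S (Icc 0 1) (Icc S₀ S₁))
    {p q : ℝ} (hp : 0 ≤ p) (hpq : p ≤ q) (hq : q ≤ 1) {φ : ℝ → ℝ}
    (hφ : IntervalIntegrable φ volume p q) (h : ∀ x ∈ Ioo p q, gain l S x ≤ φ x) :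
    ∫ x in p..q, gain l S x ≤ ∫ x in p..q, φ x :=
  integral_mono_on_of_le_Ioo hpq (intervalIntegrable_gain hS hSI hp hpq hq) hφ h

theorem integral_gain_le_log (hS : Measurable S) (hSI : MapsTo S (Icc 0 1) (Icc S₀ S₁))
    {p q : ℝ} (hp : 0 ≤ p) (hpq : p ≤ q) (hq : q < 1) :
    ∫ x in p..q, gain l S x ≤ l ^ 2 / 4 * log ((1 - p) / (1 - q)) := by
  rw [← integral_inv_one_sub (hpq.trans_lt hq) hq, ← intervalIntegral.integral_const_mul]
  refine integral_gain_le_integral hS hSI hp hpq hq.le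
    (ContinuousOn.intervalIntegrable ?_) fun x hx => mul_sub_mul_sq_le_sq_div _ _ _ ?_
  · refine continuousOn_const.mul <| ContinuousOn.inv₀ (by fun_prop) fun x hx => ?_
    rw [uIcc_of_le hpq] at hx
    exact (sub_pos.2 (hx.2.trans_lt hq)).ne'
  · linarith [hx.2]

theorem integral_gain_le_of_lower_bound (hS : Measurable S)
    (hSI : MapsTo S (Icc 0 1) (Icc S₀ S₁)) (hS₀ : 0 < S₀) (hl : 0 < l)
    (hl₀ : l ≤ 2 * S₀) :
    ∫ x in (0:ℝ)..(1 - l / (2 * S₀)), gain l S x ≤ l ^ 2 / 8 := by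
  set a := 1 - l / (2 * S₀) with ha
  have h1a : 1 - a = l / (2 * S₀) := by ring
  have ha0 : 0 ≤ a := by rw [ha, sub_nonneg, div_le_one (by positivity)]; exact hl₀
  have ha1 : a ≤ 1 := by linarith [div_pos hl (by linarith : (0:ℝ) < 2 * S₀)]
  refine (integral_gain_le_integral hS hSI le_rfl ha0 ha1
    ((by fun_prop : Continuous fun x : ℝ => l * S₀ - (1 - x) * S₀ ^ 2).intervalIntegrable _ _)
    fun x hx => mul_sub_mul_sq_le_of_le (by linarith [hx.2])
      (hSI ⟨hx.1.le, by linarith [hx.2]⟩).1 ?_).trans ?_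
  · have hx : l / (2 * S₀) ≤ 1 - x := by linarith [hx.2]
    rw [div_le_iff₀ (by linarith)] at hx
    linarith
  · have hla : l = 2 * S₀ * (1 - a) := by rw [h1a]; field_simp
    rw [integral_mul_sub_one_sub_mul]
    nlinarith [sq_nonneg (S₀ * (2 * a - 1))]

theorem integral_gain_le_of_upper_bound (hS : Measurable S)
    (hSI : MapsTo S (Icc 0 1) (Icc S₀ S₁)) (hS₁ : 0 < S₁) (hl : 0 < l)
    (hl₁ : l ≤ 2 * S₁) :
    ∫ x in (1 - l / (2 * S₁))..1, gain l S x ≤ 3 * l ^ 2 / 8 := by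
  set b := 1 - l / (2 * S₁) with hb
  have h1b : 1 - b = l / (2 * S₁) := by ring
  have hb0 : 0 ≤ b := by rw [hb, sub_nonneg, div_le_one (by positivity)]; exact hl₁
  have hb1 : b ≤ 1 := by linarith [div_pos hl (by linarith : (0:ℝ) < 2 * S₁)]
  refine (integral_gain_le_integral hS hSI hb0 hb1 le_rfl
    ((by fun_prop : Continuous fun x : ℝ => l * S₁ - (1 - x) * S₁ ^ 2).intervalIntegrable _ _)
    fun x hx => mul_sub_mul_sq_le_of_ge (by linarith [hx.2])
      (hSI ⟨hb0.trans hx.1.le, hx.2.le⟩).2 ?_).trans_eq ?_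
  · have hx : 1 - x ≤ l / (2 * S₁) := by linarith [hx.1]
    rw [le_div_iff₀ (by linarith)] at hx
    linarith
  · rw [integral_mul_sub_one_sub_mul, h1b]
    field_simp
    ring

theorem integral_gain_le (hS₀ : 0 < S₀) (hS₀S₁ : S₀ ≤ S₁) (hS : Measurable S)
    (hSI : MapsTo S (Icc 0 1) (Icc S₀ S₁)) (hl : 0 < l) (hl₁ : l ≤ 2 * S₁) :
    ∫ x in (0:ℝ)..1, gain l S x ≤ l ^ 2 / 2 * (1 + 1/2 * log (S₁ / S₀)) := by
  have hS₁ : 0 < S₁ := hS₀.trans_le hS₀S₁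
  have high := integral_gain_le_of_upper_bound hS hSI hS₁ hl hl₁
  set b := 1 - l / (2 * S₁) with hb
  have h1b : 1 - b = l / (2 * S₁) := by ring
  have hb0 : 0 ≤ b := by rw [hb, sub_nonneg, div_le_one (by positivity)]; exact hl₁
  have hb1 : b < 1 := by linarith [div_pos hl (by linarith : (0:ℝ) < 2 * S₁)]
  rw [← integral_add_adjacent_intervals (intervalIntegrable_gain hS hSI le_rfl hb0 hb1.le)
    (intervalIntegrable_gain hS hSI hb0 hb1.le le_rfl)]
  rcases le_or_gt l (2 * S₀) with hl₀ | hl₀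
  · have low := integral_gain_le_of_lower_bound hS hSI hS₀ hl hl₀
    set a := 1 - l / (2 * S₀) with ha
    have ha0 : 0 ≤ a := by rw [ha, sub_nonneg, div_le_one (by positivity)]; exact hl₀
    have hab : a ≤ b := by rw [ha, hb]; gcongr
    have mid := integral_gain_le_log (l := l) hS hSI ha0 hab hb1
    rw [show (1 - a) / (1 - b) = S₁ / S₀ by rw [h1b, ha, sub_sub_cancel]; field_simp] at mid
    rw [← integral_add_adjacent_intervals (intervalIntegrable_gain hS hSI le_rfl ha0
      (hab.trans hb1.le)) (intervalIntegrable_gain hS hSI ha0 hab hb1.le)]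
    linarith
  · have mid := integral_gain_le_log (l := l) hS hSI le_rfl hb0 hb1
    have hlog : log ((1 - 0) / (1 - b)) ≤ log (S₁ / S₀) := by
      rw [sub_zero, h1b, one_div_div]
      apply log_le_log (by positivity)
      rw [div_le_div_iff₀ hl hS₀]
      nlinarith
    nlinarith [mul_le_mul_of_nonneg_left hlog (by positivity : 0 ≤ l ^ 2 / 4)]

theorem integral_zero_one_mem_Icc (hS : Measurable S) (hSI : MapsTo S (Icc 0 1) (Icc S₀ S₁)) :
    ∫ x in (0:ℝ)..1, S x ∈ Icc S₀ S₁ := by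
  have hint : IntervalIntegrable S volume 0 1 :=
    intervalIntegrable_comp_of_mapsTo (g := Prod.snd) continuous_snd hS zero_le_one hSI
  constructor
  · simpa using integral_mono_on zero_le_one intervalIntegrable_const hint fun x hx => (hSI hx).1
  · simpa using integral_mono_on zero_le_one hint intervalIntegrable_const fun x hx => (hSI hx).2

theorem integral_gain_eq (hS : Measurable S) (hSI : MapsTo S (Icc 0 1) (Icc S₀ S₁)) :
    ∫ x in (0:ℝ)..1, gain l S x =
      l * (∫ x in (0:ℝ)..1, S x) - ∫ x in (0:ℝ)..1, (1 - x) * S x ^ 2 := by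
  unfold gain
  rw [integral_sub
      ((intervalIntegrable_comp_of_mapsTo (g := Prod.snd) continuous_snd hS zero_le_one
        hSI).const_mul _)
      (intervalIntegrable_comp_of_mapsTo (g := fun z => (1 - z.1) * z.2 ^ 2) (by fun_prop) hS
        zero_le_one hSI),
    intervalIntegral.integral_const_mul]

theorem sq_integral_le (hS₀ : 0 < S₀) (hS₀S₁ : S₀ ≤ S₁) (hS : Measurable S)
    (hSI : MapsTo S (Icc 0 1) (Icc S₀ S₁)) :
    (∫ x in (0:ℝ)..1, S x) ^ 2 ≤
      2 * (1 + 1/2 * log (S₁ / S₀)) * ∫ x in (0:ℝ)..1, (1 - x) * S x ^ 2 := by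
  have hM := one_le_one_add_half_log hS₀ hS₀S₁
  obtain ⟨hI₀, hI₁⟩ := integral_zero_one_mem_Icc hS hSI
  set M := 1 + 1/2 * log (S₁ / S₀)
  set I := ∫ x in (0:ℝ)..1, S x
  set J := ∫ x in (0:ℝ)..1, (1 - x) * S x ^ 2
  have hl : 0 < I / M := div_pos (hS₀.trans_le hI₀) (by linarith)
  have hl₁ : I / M ≤ 2 * S₁ := by
    rw [div_le_iff₀ (by linarith)]; nlinarith
  have key : I / M * I - J ≤ (I / M) ^ 2 / 2 * M :=
    (integral_gain_eq hS hSI).symm.trans_le (integral_gain_le hS₀ hS₀S₁ hS hSI hl hl₁)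
  have hsq : (I / M) ^ 2 / 2 * M = I / M * I / 2 := by field_simp
  calc I ^ 2 = M * (I / M * I) := by field_simp
    _ ≤ M * (2 * J) := mul_le_mul_of_nonneg_left (by linarith) (by linarith)
    _ = 2 * M * J := by ring

theorem coolingFunctional_le (hS₀ : 0 < S₀) (hS₀S₁ : S₀ ≤ S₁) (hS : Measurable S)
    (hSI : MapsTo S (Icc 0 1) (Icc S₀ S₁)) :
    coolingFunctional S ≤ 1 + 1/2 * log (S₁ / S₀) := by
  have h := sq_integral_le hS₀ hS₀S₁ hS hSI
  have hI := (integral_zero_one_mem_Icc hS hSI).1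
  have hM := one_le_one_add_half_log hS₀ hS₀S₁
  have hJ : 0 < ∫ x in (0:ℝ)..1, (1 - x) * S x ^ 2 := by
    by_contra! hJ
    nlinarith [mul_nonpos_of_nonneg_of_nonpos (zero_le_one.trans hM) hJ]
  unfold coolingFunctional
  rw [div_le_iff₀ hJ]
  linarith

end Admissible

section Sopt

variable {S₀ S₁ : ℝ}

theorem measurable_Sopt (S₀ S₁ : ℝ) : Measurable (Sopt S₀ S₁) :=
  Measurable.ite measurableSet_Iic measurable_const
    (Measurable.ite measurableSet_Iio (by fun_prop) measurable_const)

theorem Sopt_mem_Icc (hS₀ : 0 < S₀) (hS₀S₁ : S₀ ≤ S₁) (x : ℝ) :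
    Sopt S₀ S₁ x ∈ Icc S₀ S₁ := by
  have hS₁ : 0 < S₁ := hS₀.trans_le hS₀S₁
  unfold Sopt
  split_ifs with h₁ h₂
  · exact ⟨le_rfl, hS₀S₁⟩
  · have hx : S₀ < 2 * S₁ * (1 - x) := by rw [← div_lt_iff₀' (by linarith)]; linarith
    constructor
    · rw [le_div_iff₀ (by nlinarith)]; nlinarith
    · rw [div_le_iff₀ (by nlinarith)]; linarith
  · exact ⟨hS₀S₁, le_rfl⟩

theorem one_half_le_one_sub_div (hS₀ : 0 < S₀) (hS₀S₁ : S₀ ≤ S₁) :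
    1 / 2 ≤ 1 - S₀ / (2 * S₁) := by
  have : S₀ / (2 * S₁) ≤ 1 / 2 := by
    rw [div_le_iff₀ (by linarith)]; linarith
  linarith

theorem integral_comp_Sopt {g : ℝ × ℝ → ℝ} (hg : Continuous g) (hS₀ : 0 < S₀)
    (hS₀S₁ : S₀ ≤ S₁) :
    ∫ x in (0:ℝ)..1, g (x, Sopt S₀ S₁ x) =
      (∫ x in (0:ℝ)..1/2, g (x, S₀)) +
        (∫ x in (1/2)..(1 - S₀ / (2 * S₁)), g (x, S₀ / (2 * (1 - x)))) +
        ∫ x in (1 - S₀ / (2 * S₁))..1, g (x, S₁) := by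
  set b := 1 - S₀ / (2 * S₁) with hb
  have hb₀ : 1 / 2 ≤ b := one_half_le_one_sub_div hS₀ hS₀S₁
  have hb₁ : b ≤ 1 := by linarith [div_pos hS₀ (by linarith : (0:ℝ) < 2 * S₁)]
  have hint {p q : ℝ} (hpq : p ≤ q) :
      IntervalIntegrable (fun x => g (x, Sopt S₀ S₁ x)) volume p q :=
    intervalIntegrable_comp_of_mapsTo hg (measurable_Sopt _ _) hpq fun x _ =>
      Sopt_mem_Icc hS₀ hS₀S₁ x
  rw [← integral_add_adjacent_intervals (hint (by linarith)) (hint hb₁),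
    ← integral_add_adjacent_intervals (hint (by norm_num)) (hint hb₀)]
  have h₁ : ∫ x in (0:ℝ)..1/2, g (x, Sopt S₀ S₁ x) = ∫ x in (0:ℝ)..1/2, g (x, S₀) :=
    integral_congr_Ioo_of_le (by norm_num) fun x hx => by simp only [Sopt, if_pos hx.2.le]
  have h₂ :
      ∫ x in (1/2)..b, g (x, Sopt S₀ S₁ x) = ∫ x in (1/2)..b, g (x, S₀ / (2 * (1 - x))) :=
    integral_congr_Ioo_of_le hb₀ fun x hx => by
      simp only [Sopt, ← hb, if_neg (not_le.2 hx.1), if_pos hx.2]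
  have h₃ : ∫ x in b..1, g (x, Sopt S₀ S₁ x) = ∫ x in b..1, g (x, S₁) :=
    integral_congr_Ioo_of_le hb₁ fun x hx => by
      simp only [Sopt, ← hb, if_neg (show ¬x ≤ 1 / 2 by linarith [hx.1]),
        if_neg (not_lt.2 hx.1.le)]
  rw [h₁, h₂, h₃]

theorem log_Sopt_middle (hS₀ : 0 < S₀) (hS₁ : 0 < S₁) :
    log ((1 - 1 / 2) / (1 - (1 - S₀ / (2 * S₁)))) = log (S₁ / S₀) := by
  rw [sub_sub_cancel]
  congr 1
  field_simp
  norm_num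

theorem integral_Sopt (hS₀ : 0 < S₀) (hS₀S₁ : S₀ ≤ S₁) :
    ∫ x in (0:ℝ)..1, Sopt S₀ S₁ x = S₀ * (1 + 1/2 * log (S₁ / S₀)) := by
  have hS₁ : 0 < S₁ := hS₀.trans_le hS₀S₁
  have hb₁ : 1 - S₀ / (2 * S₁) < 1 := by
    linarith [div_pos hS₀ (by linarith : (0:ℝ) < 2 * S₁)]
  have h := integral_comp_Sopt (g := Prod.snd) continuous_snd hS₀ hS₀S₁
  simp only at h
  have hmid : ∀ x : ℝ, S₀ / (2 * (1 - x)) = S₀ / 2 * (1 - x)⁻¹ := fun x => by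
    rw [div_mul_eq_div_div, div_eq_mul_inv]
  simp_rw [h, hmid]
  rw [intervalIntegral.integral_const, intervalIntegral.integral_const,
    intervalIntegral.integral_const_mul, integral_inv_one_sub (by norm_num) hb₁,
    log_Sopt_middle hS₀ hS₁, smul_eq_mul, smul_eq_mul]
  field_simp
  ring

theorem integral_one_sub_mul_Sopt_sq (hS₀ : 0 < S₀) (hS₀S₁ : S₀ ≤ S₁) :
    ∫ x in (0:ℝ)..1, (1 - x) * Sopt S₀ S₁ x ^ 2 =
      S₀ ^ 2 * (1 + 1/2 * log (S₁ / S₀)) / 2 := by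
  have hS₁ : 0 < S₁ := hS₀.trans_le hS₀S₁
  have hb₁ : 1 - S₀ / (2 * S₁) < 1 := by
    linarith [div_pos hS₀ (by linarith : (0:ℝ) < 2 * S₁)]
  have h := integral_comp_Sopt (g := fun z => (1 - z.1) * z.2 ^ 2) (by fun_prop) hS₀ hS₀S₁
  simp only at h
  have hmid : ∫ x in (1/2)..(1 - S₀ / (2 * S₁)), (1 - x) * (S₀ / (2 * (1 - x))) ^ 2 =
      ∫ x in (1/2)..(1 - S₀ / (2 * S₁)), S₀ ^ 2 / 4 * (1 - x)⁻¹ := by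
    refine integral_congr fun x hx => ?_
    rw [uIcc_of_le (one_half_le_one_sub_div hS₀ hS₀S₁)] at hx
    have : 1 - x ≠ 0 := (sub_pos.2 (hx.2.trans_lt hb₁)).ne'
    field_simp
    norm_num
  rw [h, hmid, intervalIntegral.integral_mul_const, intervalIntegral.integral_mul_const,
    integral_one_sub, integral_one_sub, intervalIntegral.integral_const_mul,
    integral_inv_one_sub (by norm_num) hb₁, log_Sopt_middle hS₀ hS₁]
  field_simp
  ring

theorem coolingFunctional_Sopt (hS₀ : 0 < S₀) (hS₀S₁ : S₀ ≤ S₁) :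
    coolingFunctional (Sopt S₀ S₁) = 1 + 1/2 * log (S₁ / S₀) := by
  have hM := one_le_one_add_half_log hS₀ hS₀S₁
  rw [coolingFunctional, integral_Sopt hS₀ hS₀S₁,
    integral_one_sub_mul_Sopt_sq hS₀ hS₀S₁]
  field_simp

end Sopt

theorem sup_cooling_functional (S₀ S₁ : ℝ) (hS₀ : 0 < S₀) (hS₀S₁ : S₀ ≤ S₁) :
    IsGreatest {y : ℝ | ∃ S : ℝ → ℝ, Measurable S ∧
        (∀ x ∈ Set.Icc (0:ℝ) 1, S₀ ≤ S x ∧ S x ≤ S₁) ∧ y = coolingFunctional S}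
      (1 + (1/2) * Real.log (S₁ / S₀)) ∧
    coolingFunctional (Sopt S₀ S₁) = 1 + (1/2) * Real.log (S₁ / S₀) := by
  have hopt := coolingFunctional_Sopt hS₀ hS₀S₁
  refine ⟨⟨⟨Sopt S₀ S₁, measurable_Sopt S₀ S₁, fun x _ => Sopt_mem_Icc hS₀ hS₀S₁ x, hopt.symm⟩,
    ?_⟩, hopt⟩
  rintro _ ⟨S, hS, hSI, rfl⟩
  exact coolingFunctional_le hS₀ hS₀S₁ hS hSI
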